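/- arXiv:0907.1071 — 2 statements merged into one kernel-verified Lean document; each statement's English description precedes it below -/
import Mathlib

section
/- For a continuous square-integrable real-valued martingale M on [0,T], the quartic variation vanishes: for any sequence of partitions of [0,T] with mesh tending to zero, the sums ∑_j |M_{t_{j+1}} - M_{t_j}|^4 converge to 0 in probability. -/
/-!
Write `Δⱼ` for the increments of `M` along the `n`-th partition and `Qₙ = ∑ Δⱼ²`. Pathwise,
`∑ Δⱼ⁴ ≤ (maxⱼ Δⱼ²) Qₙ`. By uniform continuity of the paths on `[0,T]`, `maxⱼ |Δⱼ| → 0`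
pointwise, hence in probability. Orthogonality of martingale increments gives
`E Qₙ = E M_T² - E M_0² ≤ E M_T²`, so by Markov's inequality `Qₙ` stays bounded in probability,
and the product of the two factors tends to `0` in probability.
-/

open MeasureTheory Filter Topology Set

theorem Monotone.mem_Icc_of_forall_ge_eq {α : Type*} [Preorder α] {u : ℕ → α}
    (hu : Monotone u) {k : ℕ} {b : α} (hk : ∀ j, k ≤ j → u j = b) (j : ℕ) :
    u j ∈ Icc (u 0) b :=
  ⟨hu j.zero_le, hk (max j k) (le_max_right j k) ▸ hu (le_max_left j k)⟩

theorem eventually_forall_dist_lt_of_mesh {α : Type*} [PseudoMetricSpace α] {f : ℝ → α}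
    {s : Set ℝ} (hs : IsCompact s) (hf : ContinuousOn f s) {t : ℕ → ℕ → ℝ}
    (hts : ∀ n j, t n j ∈ s) (hmono : ∀ n j, t n j ≤ t n (j + 1))
    (hmesh : ∀ ε > (0:ℝ), ∃ N, ∀ n ≥ N, ∀ j, t n (j + 1) - t n j ≤ ε) {c : ℝ} (hc : 0 < c) :
    ∀ᶠ n in atTop, ∀ j, dist (f (t n (j + 1))) (f (t n j)) < c := by
  obtain ⟨δ, hδ, hfδ⟩ :=
    Metric.uniformContinuousOn_iff.1 (hs.uniformContinuousOn_of_continuous hf) c hc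
  obtain ⟨N, hN⟩ := hmesh (δ / 2) (half_pos hδ)
  filter_upwards [eventually_ge_atTop N] with n hn j
  refine hfδ _ (hts n (j + 1)) _ (hts n j) ?_
  rw [Real.dist_eq, abs_of_nonneg (sub_nonneg.2 (hmono n j))]
  linarith [hN n hn j]

theorem sum_abs_pow_four_le_sq_mul_sum_sq {ι : Type*} {s : Finset ι} {x : ι → ℝ} {c : ℝ}
    (hx : ∀ j ∈ s, |x j| ≤ c) : ∑ j ∈ s, |x j| ^ 4 ≤ c ^ 2 * ∑ j ∈ s, x j ^ 2 := by
  rw [Finset.mul_sum]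
  refine Finset.sum_le_sum fun j hj => ?_
  calc |x j| ^ 4 = |x j| ^ 2 * x j ^ 2 := by rw [← sq_abs (x j)]; ring
    _ ≤ c ^ 2 * x j ^ 2 := by gcongr; exact hx j hj

section Probability

variable {Ω : Type*} {m0 : MeasurableSpace Ω} {P : Measure Ω} [IsFiniteMeasure P]

theorem tendstoInMeasure_zero_of_abs_le_mul_integral_bounded {ι : Type*} {l : Filter ι}
    {S Q : ι → Ω → ℝ} {C : ℝ} (hQ_nonneg : ∀ i ω, 0 ≤ Q i ω) (hQ_int : ∀ i, Integrable (Q i) P)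
    (hQ_le : ∀ i, ∫ ω, Q i ω ∂P ≤ C)
    (hS : ∀ η > 0, Tendsto (fun i => P {ω | η * Q i ω < |S i ω|}) l (𝓝 0)) :
    TendstoInMeasure P S l (fun _ => 0) := by
  rw [tendstoInMeasure_iff_measureReal_norm]
  intro ε hε
  simp only [sub_zero, Real.norm_eq_abs]
  rw [Metric.tendsto_nhds]
  intro δ hδ
  -- Markov: `P(K ≤ Q) ≤ C / K < δ / 2`; off that event, `|S| ≤ η Q < η K = ε`.
  set K := 2 * (|C| + 1) / δ with hK_def
  have hK : 0 < K := by positivity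
  set η := ε / K
  have hη : 0 < η := by positivity
  have hmarkov : ∀ i, P.real {ω | K ≤ Q i ω} < δ / 2 := by
    intro i
    refine lt_of_mul_lt_mul_left ?_ hK.le
    calc K * P.real {ω | K ≤ Q i ω} ≤ C :=
          (mul_meas_ge_le_integral_of_nonneg (ae_of_all _ (hQ_nonneg i)) (hQ_int i) K).trans
            (hQ_le i)
      _ < |C| + 1 := (le_abs_self C).trans_lt (lt_add_one _)
      _ = K * (δ / 2) := by rw [hK_def]; field_simp
  have hcover : ∀ i, {ω | ε ≤ |S i ω|} ⊆ {ω | η * Q i ω < |S i ω|} ∪ {ω | K ≤ Q i ω} := by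
    intro i ω hε_le
    by_contra! h
    simp only [mem_union, mem_ofPred_eq, not_or, not_lt, not_le] at h
    have : η * Q i ω < η * K := mul_lt_mul_of_pos_left h.2 hη
    rw [div_mul_cancel₀ ε hK.ne'] at this
    exact absurd (hε_le.trans h.1) this.not_ge
  have hS' := (ENNReal.tendsto_toReal ENNReal.zero_ne_top).comp (hS η hη)
  filter_upwards [hS'.eventually (gt_mem_nhds (half_pos hδ))] with i hi
  rw [Real.dist_0_eq_abs, abs_of_nonneg measureReal_nonneg]
  calc P.real {ω | ε ≤ |S i ω|}
      ≤ P.real {ω | η * Q i ω < |S i ω|} + P.real {ω | K ≤ Q i ω} :=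
        (measureReal_mono (hcover i)).trans (measureReal_union_le _ _)
    _ < δ / 2 + δ / 2 := add_lt_add hi (hmarkov i)
    _ = δ := add_halves δ

theorem tendsto_measure_exists_le_abs_sub_of_mesh {X : ℝ → Ω → ℝ} (hX : ∀ r, Measurable (X r))
    {s : Set ℝ} (hs : IsCompact s) (hcont : ∀ ω, ContinuousOn (fun r => X r ω) s)
    {t : ℕ → ℕ → ℝ} (hts : ∀ n j, t n j ∈ s) (hmono : ∀ n j, t n j ≤ t n (j + 1))
    (hmesh : ∀ ε > (0:ℝ), ∃ N, ∀ n ≥ N, ∀ j, t n (j + 1) - t n j ≤ ε) {c : ℝ} (hc : 0 < c) :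
    Tendsto (fun n => P {ω | ∃ j, c ≤ |X (t n (j + 1)) ω - X (t n j) ω|}) atTop (𝓝 0) := by
  have hmeas : ∀ n, MeasurableSet {ω | ∃ j, c ≤ |X (t n (j + 1)) ω - X (t n j) ω|} := by
    intro n
    rw [ofPred_exists]
    exact MeasurableSet.iUnion fun j => measurableSet_le measurable_const ((hX _).sub (hX _)).abs
  have hlim : ∀ ω, ∀ᶠ n in atTop,
      ω ∈ {ω | ∃ j, c ≤ |X (t n (j + 1)) ω - X (t n j) ω|} ↔ ω ∈ (∅ : Set Ω) := by
    intro ω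
    filter_upwards [eventually_forall_dist_lt_of_mesh hs (hcont ω) hts hmono hmesh hc] with n hn
    simpa [← Real.dist_eq] using hn
  simpa using tendsto_measure_of_tendsto_indicator_of_isFiniteMeasure atTop P hmeas hlim

end Probability

namespace MeasureTheory.Martingale

variable {Ω ι : Type*} {m0 : MeasurableSpace Ω} {P : Measure Ω} [IsFiniteMeasure P]
  [Preorder ι] {ℱ : Filtration ι m0} {M : ι → Ω → ℝ}

theorem integral_mul_eq_integral_sq (hM : Martingale M ℱ P) {s u : ι} (hsu : s ≤ u)
    (hs : MemLp (M s) 2 P) (hu : MemLp (M u) 2 P) :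
    ∫ ω, M s ω * M u ω ∂P = ∫ ω, M s ω ^ 2 ∂P := by
  have hpull : P[M s * M u | ℱ s] =ᵐ[P] M s * P[M u | ℱ s] :=
    condExp_mul_of_stronglyMeasurable_left (hM.stronglyAdapted s)
      (hs.integrable_mul hu) (hM.integrable u)
  calc ∫ ω, M s ω * M u ω ∂P = ∫ ω, (P[M s * M u | ℱ s]) ω ∂P :=
        (integral_condExp (ℱ.le s)).symm
    _ = ∫ ω, M s ω ^ 2 ∂P := by
        refine integral_congr_ae ?_
        filter_upwards [hpull, hM.condExp_ae_eq hsu] with ω h₁ h₂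
        simp only [h₁, Pi.mul_apply, h₂, sq]

theorem integral_sq_sub (hM : Martingale M ℱ P) {s u : ι} (hsu : s ≤ u)
    (hs : MemLp (M s) 2 P) (hu : MemLp (M u) 2 P) :
    ∫ ω, (M u ω - M s ω) ^ 2 ∂P = ∫ ω, M u ω ^ 2 ∂P - ∫ ω, M s ω ^ 2 ∂P := by
  have hexpand : (fun ω => (M u ω - M s ω) ^ 2)
      = fun ω => M u ω ^ 2 + M s ω ^ 2 - 2 * (M s ω * M u ω) := by
    funext ω; ring
  rw [hexpand, integral_sub (f := fun ω => M u ω ^ 2 + M s ω ^ 2)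
    (g := fun ω => 2 * (M s ω * M u ω))
    (hu.integrable_sq.add hs.integrable_sq) ((hs.integrable_mul hu).const_mul 2),
    integral_add hu.integrable_sq hs.integrable_sq,
    integral_const_mul, hM.integral_mul_eq_integral_sq hsu hs hu]
  ring

theorem integral_sum_sq_increments (hM : Martingale M ℱ P) (hL2 : ∀ i, MemLp (M i) 2 P)
    {t : ℕ → ι} (ht : Monotone t) (k : ℕ) :
    ∫ ω, ∑ j ∈ Finset.range k, (M (t (j + 1)) ω - M (t j) ω) ^ 2 ∂P
      = ∫ ω, M (t k) ω ^ 2 ∂P - ∫ ω, M (t 0) ω ^ 2 ∂P := by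
  rw [integral_finsetSum (f := fun j ω => (M (t (j + 1)) ω - M (t j) ω) ^ 2) _
    fun j _ => ((hL2 _).sub (hL2 _)).integrable_sq]
  simp_rw [hM.integral_sq_sub (ht (Nat.le_succ _)) (hL2 _) (hL2 _)]
  exact Finset.sum_range_sub (fun j => ∫ ω, M (t j) ω ^ 2 ∂P) k

end MeasureTheory.Martingale

theorem quartic_variation_tendsto_zero_in_probability_general
    {Ω : Type*} {m0 : MeasurableSpace Ω} (P : Measure Ω) [IsProbabilityMeasure P]
    (ℱ : Filtration ℝ m0) (T : ℝ)
    (M : ℝ → Ω → ℝ)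
    (hMart : Martingale M ℱ P)
    (hL2 : ∀ s : ℝ, MemLp (M s) 2 P)
    (hcont : ∀ ω, Continuous fun s => M s ω)
    -- the sequence of partitions of `[0,T]`
    (k : ℕ → ℕ) (t : ℕ → ℕ → ℝ)
    (hmono : ∀ n j, t n j ≤ t n (j + 1))
    (hstart : ∀ n, t n 0 = 0)
    (hend : ∀ n j, k n ≤ j → t n j = T)
    (hmesh : ∀ ε > (0:ℝ), ∃ N, ∀ n ≥ N, ∀ j, t n (j + 1) - t n j ≤ ε) :
    TendstoInMeasure P
      (fun n ω => ∑ j ∈ Finset.range (k n), |M (t n (j + 1)) ω - M (t n j) ω| ^ 4)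
      atTop (fun _ => 0) := by
  have hmeas : ∀ r, Measurable (M r) :=
    fun r => ((hMart.stronglyAdapted r).mono (ℱ.le r)).measurable
  have ht_mono : ∀ n, Monotone (t n) := fun n => monotone_nat_of_le_succ (hmono n)
  have hts : ∀ n j, t n j ∈ Icc 0 T :=
    fun n j => hstart n ▸ (ht_mono n).mem_Icc_of_forall_ge_eq (hend n) j
  refine tendstoInMeasure_zero_of_abs_le_mul_integral_bounded (C := ∫ ω, M T ω ^ 2 ∂P)
    (Q := fun n ω => ∑ j ∈ Finset.range (k n), (M (t n (j + 1)) ω - M (t n j) ω) ^ 2)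
    (fun n ω => Finset.sum_nonneg fun j _ => sq_nonneg _)
    (fun n => integrable_finsetSum _ fun j _ => ((hL2 _).sub (hL2 _)).integrable_sq)
    (fun n => ?_) (fun η hη => ?_)
  · rw [hMart.integral_sum_sq_increments hL2 (ht_mono n), hend n (k n) le_rfl]
    exact sub_le_self _ (integral_nonneg fun ω => sq_nonneg _)
  · refine tendsto_of_tendsto_of_tendsto_of_le_of_le tendsto_const_nhds
      (tendsto_measure_exists_le_abs_sub_of_mesh hmeas isCompact_Icc
        (fun ω => (hcont ω).continuousOn) hts hmono hmesh (Real.sqrt_pos.2 hη))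
      (fun _ => zero_le) (fun n => measure_mono fun ω hω => ?_)
    by_contra! hsmall
    simp only [mem_ofPred_eq, not_exists, not_le] at hsmall
    have hbound := sum_abs_pow_four_le_sq_mul_sum_sq (s := Finset.range (k n))
      fun j _ => (hsmall j).le
    rw [Real.sq_sqrt hη.le] at hbound
    rw [mem_ofPred_eq, abs_of_nonneg (Finset.sum_nonneg fun j _ => by positivity)] at hω
    exact hω.not_ge hbound

/-- For a continuous square-integrable real-valued martingale `M` on `[0,T]`,
the quartic variation vanishes: along any sequence of partitions of `[0,T]` with mesh tending
to zero, the sums `∑_j |M_{t_{j+1}} - M_{t_j}|^4` converge to `0` in probability. -/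
theorem quartic_variation_tendsto_zero_in_probability
    {Ω : Type*} {m0 : MeasurableSpace Ω} (P : Measure Ω) [IsProbabilityMeasure P]
    (ℱ : Filtration ℝ m0) (T : ℝ) (hT : 0 < T)
    (M : ℝ → Ω → ℝ)
    (hMart : Martingale M ℱ P)
    (hL2 : ∀ s : ℝ, MemLp (M s) 2 P)
    (hcont : ∀ ω, Continuous fun s => M s ω)
    -- the sequence of partitions of `[0,T]`
    (k : ℕ → ℕ) (t : ℕ → ℕ → ℝ)
    (hmono : ∀ n j, t n j ≤ t n (j + 1))
    (hstart : ∀ n, t n 0 = 0)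
    (hend : ∀ n j, k n ≤ j → t n j = T)
    (hmesh : ∀ ε > (0:ℝ), ∃ N, ∀ n ≥ N, ∀ j, t n (j + 1) - t n j ≤ ε) :
    TendstoInMeasure P
      (fun n ω => ∑ j ∈ Finset.range (k n), |M (t n (j + 1)) ω - M (t n j) ω| ^ 4)
      atTop (fun _ => 0) :=
  quartic_variation_tendsto_zero_in_probability_general P ℱ T M hMart hL2 hcont k t hmono hstart
    hend hmesh
end

section
/- Let X be a square-integrable martingale and F a C² bounded function with bounded derivatives. Then along a sequence of partitions with mesh → 0 of [t,s], the sums ∑_j |E[F(X̃_{T-t_{j+1}}) - F(X̃_{T-t_j})]|² are bounded by K² ∑_j E[|X̃_{T-t_{j+1}} - X̃_{T-t_j}|⁴] (via Cauchy–Schwarz on the inner expectation), and hence tend to 0 since the quartic variation of the continuous L⁴ martingale X̃ vanishes. -/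
/-!
Expanding `F` to first order at `X a` bounds `|E[F(X b) - F(X a)]|` by `K E[(X b - X a)²]`,
because the first-order term `F'(X a) (X b - X a)` has mean zero by the martingale property.
Orthogonality of increments gives `E[(X b - X a)²] = h b - h a` for `h r = E[X r²]`, and
Cauchy–Schwarz bounds the square of `E[(X b - X a)²]` by `E[(X b - X a)⁴]`.

For the limit, the sum is at most `K² · max_j Δ_j h · (h (T - t) - h (T - s))`, which tends to
zero as soon as `h` is continuous on `(-∞, T]`. By Fatou's lemma and continuity of the paths,
both `h r` and `E[(X T - X r)²]` are lower semicontinuous in `r`; since they add up to the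
constant `h T` for `r ≤ T`, each is also upper semicontinuous there.
-/

open MeasureTheory Filter Set Topology
open scoped ENNReal

theorem abs_sub_sub_deriv_mul_le {F : ℝ → ℝ} (hF : ContDiff ℝ 2 F) {K : ℝ}
    (hF'' : ∀ y, |deriv (deriv F) y| ≤ 2 * K) (a b : ℝ) :
    |F b - F a - deriv F a * (b - a)| ≤ K * (b - a) ^ 2 := by
  rcases eq_or_ne a b with rfl | hab
  · simp
  obtain ⟨ξ, -, hξ⟩ :=
    taylor_mean_remainder_lagrange_iteratedDeriv (n := 1) hab hF.contDiffOn
  have hderiv : derivWithin F (uIcc a b) a = deriv F a :=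
    (hF.differentiable two_ne_zero a).derivWithin (uniqueDiffOn_uIcc hab a left_mem_uIcc)
  rw [taylorWithinEval_succ, taylor_within_zero_eval, iteratedDerivWithin_one, hderiv,
    iteratedDeriv_succ, iteratedDeriv_one] at hξ
  norm_num at hξ
  rw [show F b - F a - deriv F a * (b - a) = F b - (F a + (b - a) * deriv F a) by ring, hξ,
    abs_div, abs_mul, abs_two, abs_of_nonneg (sq_nonneg (b - a))]
  nlinarith [hF'' ξ, sq_nonneg (b - a)]

theorem sq_integral_le_integral_sq {Ω : Type*} {m : MeasurableSpace Ω} {P : Measure Ω}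
    [IsProbabilityMeasure P] {Y : Ω → ℝ} (hY : MemLp Y 2 P) :
    (∫ ω, Y ω ∂P) ^ 2 ≤ ∫ ω, Y ω ^ 2 ∂P := by
  have h := ProbabilityTheory.variance_nonneg Y P
  rw [ProbabilityTheory.variance_eq_sub hY] at h
  simpa only [Pi.pow_apply, sub_nonneg] using h

theorem lowerSemicontinuous_lintegral {α ι : Type*} {m : MeasurableSpace α} {μ : Measure α}
    [TopologicalSpace ι] [FirstCountableTopology ι] {f : ι → α → ℝ≥0∞}
    (hf : ∀ i, AEMeasurable (f i) μ) (hlsc : ∀ a, LowerSemicontinuous fun i => f i a) :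
    LowerSemicontinuous fun i => ∫⁻ a, f i a ∂μ :=
  lowerSemicontinuous_iff_le_liminf.mpr fun i =>
    (lintegral_mono fun a => (hlsc a).le_liminf i).trans (lintegral_liminf_le' hf)

theorem LowerSemicontinuous.of_ofReal {α : Type*} [TopologicalSpace α] {f : α → ℝ}
    (hf : LowerSemicontinuous fun x => ENNReal.ofReal (f x)) (hf0 : ∀ x, 0 ≤ f x) :
    LowerSemicontinuous f := by
  intro x y hy
  rcases lt_or_ge y 0 with hy0 | hy0
  · exact Eventually.of_forall fun x' => hy0.trans_le (hf0 x')
  · filter_upwards [hf x (ENNReal.ofReal y) ((ENNReal.ofReal_lt_ofReal_iff_of_nonneg hy0).mpr hy)]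
      with x' hx'
    exact (ENNReal.ofReal_lt_ofReal_iff_of_nonneg hy0).mp hx'

theorem lowerSemicontinuous_integral_sq {Ω ι : Type*} {m : MeasurableSpace Ω} {μ : Measure Ω}
    [TopologicalSpace ι] [FirstCountableTopology ι] {Y : ι → Ω → ℝ}
    (hY : ∀ i, MemLp (Y i) 2 μ) (hcont : ∀ ω, Continuous fun i => Y i ω) :
    LowerSemicontinuous fun i => ∫ ω, Y i ω ^ 2 ∂μ := by
  refine LowerSemicontinuous.of_ofReal ?_ fun i => integral_nonneg fun ω => sq_nonneg _
  simp_rw [ofReal_integral_eq_lintegral_ofReal (hY _).integrable_sq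
    (Eventually.of_forall fun ω => sq_nonneg _)]
  exact lowerSemicontinuous_lintegral
    (fun i => ((hY i).aestronglyMeasurable.pow 2).aemeasurable.ennreal_ofReal)
    fun ω => (ENNReal.continuous_ofReal.comp ((hcont ω).pow 2)).lowerSemicontinuous

theorem continuousOn_of_lowerSemicontinuous_of_add_eq {α : Type*} [TopologicalSpace α]
    {f g : α → ℝ} {s : Set α} {c : ℝ} (hf : LowerSemicontinuous f) (hg : LowerSemicontinuous g)
    (hfg : ∀ x ∈ s, f x + g x = c) : ContinuousOn f s := by
  refine continuousOn_iff_lower_upperSemicontinuousOn.mpr ⟨hf.lowerSemicontinuousOn s, ?_⟩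
  intro x hx y hy
  filter_upwards [nhdsWithin_le_nhds (hg x (c - y) (by linarith [hfg x hx])),
    self_mem_nhdsWithin] with x' hx' hs
  linarith [hfg x' hs]

theorem sum_range_sq_sub_le {a : ℕ → ℝ} {k : ℕ} {ε : ℝ}
    (h : ∀ j < k, 0 ≤ a (j + 1) - a j ∧ a (j + 1) - a j ≤ ε) :
    ∑ j ∈ Finset.range k, (a (j + 1) - a j) ^ 2 ≤ ε * (a k - a 0) := by
  rw [← Finset.sum_range_sub, Finset.mul_sum]
  refine Finset.sum_le_sum fun j hj => ?_
  obtain ⟨h0, hε⟩ := h j (Finset.mem_range.mp hj)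
  rw [sq]
  exact mul_le_mul_of_nonneg_right hε h0

theorem mem_Icc_of_partition {t s : ℝ} {k : ℕ} {u : ℕ → ℝ} (hmono : ∀ j, u j ≤ u (j + 1))
    (hstart : u 0 = t) (hend : ∀ j, k ≤ j → u j = s) (j : ℕ) : u j ∈ Icc t s := by
  have hu : Monotone u := monotone_nat_of_le_succ hmono
  refine ⟨hstart ▸ hu (Nat.zero_le j), ?_⟩
  rcases le_total j k with hjk | hkj
  · exact hend k le_rfl ▸ hu hjk
  · exact (hend j hkj).le

theorem tendsto_sum_sq_sub_of_mesh_tendsto_zero {φ : ℝ → ℝ} {t s : ℝ}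
    (hφc : ContinuousOn φ (Icc t s)) (hφm : MonotoneOn φ (Icc t s))
    {k : ℕ → ℕ} {u : ℕ → ℕ → ℝ} (hmono : ∀ n j, u n j ≤ u n (j + 1))
    (hstart : ∀ n, u n 0 = t) (hend : ∀ n j, k n ≤ j → u n j = s)
    (hmesh : ∀ ε > (0:ℝ), ∃ N, ∀ n ≥ N, ∀ j, u n (j + 1) - u n j ≤ ε) :
    Tendsto (fun n => ∑ j ∈ Finset.range (k n), (φ (u n (j + 1)) - φ (u n j)) ^ 2)
      atTop (𝓝 0) := by
  have hmem := fun n => mem_Icc_of_partition (hmono n) (hstart n) (hend n)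
  have hts : t ∈ Icc t s := hstart 0 ▸ hmem 0 0
  have hss : s ∈ Icc t s := ⟨hts.2, le_rfl⟩
  have hsmall : ∀ ε > 0, ∀ᶠ n in atTop, ∑ j ∈ Finset.range (k n),
      (φ (u n (j + 1)) - φ (u n j)) ^ 2 ≤ ε * (φ s - φ t) := by
    intro ε hε
    obtain ⟨δ, hδ, hφδ⟩ :=
      Metric.uniformContinuousOn_iff_le.mp (isCompact_Icc.uniformContinuousOn_of_continuous hφc)
        ε hε
    obtain ⟨N, hN⟩ := hmesh δ hδ
    refine eventually_atTop.mpr ⟨N, fun n hn => ?_⟩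
    have hsum := sum_range_sq_sub_le (a := fun j => φ (u n j)) (k := k n) (ε := ε) fun j _ => by
      have hle := hφm (hmem n j) (hmem n (j + 1)) (hmono n j)
      have hdist : dist (u n (j + 1)) (u n j) ≤ δ := by
        rw [Real.dist_eq, abs_of_nonneg (sub_nonneg.mpr (hmono n j))]
        exact hN n hn j
      have := hφδ _ (hmem n (j + 1)) _ (hmem n j) hdist
      rw [Real.dist_eq, abs_of_nonneg (sub_nonneg.mpr hle)] at this
      exact ⟨sub_nonneg.mpr hle, this⟩
    simpa only [hstart n, hend n (k n) le_rfl] using hsum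
  have hC : 0 ≤ φ s - φ t := sub_nonneg.mpr (hφm hts hss hts.2)
  refine tendsto_order.mpr ⟨fun a ha => Eventually.of_forall fun n =>
    ha.trans_le (Finset.sum_nonneg fun j _ => sq_nonneg _), fun a ha => ?_⟩
  have hε : 0 < a / (φ s - φ t + 1) := by positivity
  filter_upwards [hsmall _ hε] with n hn
  refine hn.trans_lt ?_
  rw [div_mul_eq_mul_div, div_lt_iff₀ (by positivity)]
  nlinarith

namespace MeasureTheory.Martingale

variable {ι Ω : Type*} [Preorder ι] {m0 : MeasurableSpace Ω} {P : Measure Ω}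
  {ℱ : Filtration ι m0} {X : ι → Ω → ℝ} {i j : ι}

section FiniteMeasure

variable [IsFiniteMeasure P]

theorem integral_mul_eq_of_le (hX : Martingale X ℱ P) (hij : i ≤ j) {f : Ω → ℝ}
    (hf : StronglyMeasurable[ℱ i] f) (hfX : Integrable (fun ω => f ω * X j ω) P) :
    ∫ ω, f ω * X j ω ∂P = ∫ ω, f ω * X i ω ∂P :=
  calc ∫ ω, f ω * X j ω ∂P = ∫ ω, P[f * X j|ℱ i] ω ∂P := (integral_condExp (ℱ.le i)).symm
    _ = ∫ ω, f ω * X i ω ∂P := integral_congr_ae <|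
        (condExp_mul_of_stronglyMeasurable_left hf hfX (hX.integrable j)).trans
          ((hX.condExp_ae_eq hij).mul_left)

theorem integral_sub_sq_eq (hX : Martingale X ℱ P) (hij : i ≤ j) (hi : MemLp (X i) 2 P)
    (hj : MemLp (X j) 2 P) :
    ∫ ω, (X j ω - X i ω) ^ 2 ∂P = ∫ ω, X j ω ^ 2 ∂P - ∫ ω, X i ω ^ 2 ∂P := by
  have hcross_int : Integrable (fun ω => 2 * (X i ω * X j ω)) P :=
    (hi.integrable_mul hj).const_mul 2
  have hcross := hX.integral_mul_eq_of_le hij (hX.stronglyAdapted i) (hi.integrable_mul hj)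
  calc ∫ ω, (X j ω - X i ω) ^ 2 ∂P
      = ∫ ω, (X j ω ^ 2 - 2 * (X i ω * X j ω) + X i ω ^ 2) ∂P := by congr 1; ext ω; ring
    _ = ∫ ω, X j ω ^ 2 ∂P - 2 * ∫ ω, X i ω * X i ω ∂P + ∫ ω, X i ω ^ 2 ∂P := by
      rw [integral_add (f := fun ω => X j ω ^ 2 - 2 * (X i ω * X j ω))
          (hj.integrable_sq.sub hcross_int) hi.integrable_sq,
        integral_sub hj.integrable_sq hcross_int, integral_const_mul, hcross]
    _ = ∫ ω, X j ω ^ 2 ∂P - ∫ ω, X i ω ^ 2 ∂P := by simp only [← sq]; ring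

theorem monotone_integral_sq (hX : Martingale X ℱ P) (hX2 : ∀ i, MemLp (X i) 2 P) :
    Monotone fun i => ∫ ω, X i ω ^ 2 ∂P := fun i j hij =>
  sub_nonneg.mp <| hX.integral_sub_sq_eq hij (hX2 i) (hX2 j) ▸
    integral_nonneg fun _ => sq_nonneg _

theorem abs_integral_comp_sub_le (hX : Martingale X ℱ P) (hij : i ≤ j) (hi : MemLp (X i) 2 P)
    (hj : MemLp (X j) 2 P) {F : ℝ → ℝ} (hF : ContDiff ℝ 2 F) {C : ℝ}
    (hF' : ∀ y, |deriv F y| ≤ C) {K : ℝ} (hF'' : ∀ y, |deriv (deriv F) y| ≤ 2 * K)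
    (hFi : Integrable (fun ω => F (X i ω)) P) (hFj : Integrable (fun ω => F (X j ω)) P) :
    |∫ ω, F (X j ω) ∂P - ∫ ω, F (X i ω) ∂P| ≤ K * ∫ ω, (X j ω - X i ω) ^ 2 ∂P := by
  set G : Ω → ℝ := fun ω => deriv F (X i ω)
  have hG : StronglyMeasurable[ℱ i] G :=
    (hF.continuous_deriv (by norm_num)).comp_stronglyMeasurable (hX.stronglyAdapted i)
  have hGX : ∀ r, Integrable (fun ω => G ω * X r ω) P := fun r =>
    (hX.integrable r).bdd_mul (hG.mono (ℱ.le i)).aestronglyMeasurable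
      (Eventually.of_forall fun ω => hF' (X i ω))
  have hlin : Integrable (fun ω => G ω * (X j ω - X i ω)) P := by
    simp only [mul_sub]
    exact (hGX j).sub (hGX i)
  have hlin_zero : ∫ ω, G ω * (X j ω - X i ω) ∂P = 0 := by
    simp only [mul_sub]
    rw [integral_sub (hGX j) (hGX i), hX.integral_mul_eq_of_le hij hG (hGX j), sub_self]
  calc |∫ ω, F (X j ω) ∂P - ∫ ω, F (X i ω) ∂P|
      = |∫ ω, (F (X j ω) - F (X i ω) - G ω * (X j ω - X i ω)) ∂P| := by
        rw [integral_sub (f := fun ω => F (X j ω) - F (X i ω)) (hFj.sub hFi) hlin, hlin_zero,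
          sub_zero, integral_sub hFj hFi]
    _ ≤ ∫ ω, |F (X j ω) - F (X i ω) - G ω * (X j ω - X i ω)| ∂P :=
        abs_integral_le_integral_abs
    _ ≤ ∫ ω, K * (X j ω - X i ω) ^ 2 ∂P :=
        integral_mono ((hFj.sub hFi).sub hlin).abs ((hj.sub hi).integrable_sq.const_mul K)
          fun ω => abs_sub_sub_deriv_mul_le hF hF'' (X i ω) (X j ω)
    _ = K * ∫ ω, (X j ω - X i ω) ^ 2 ∂P := integral_const_mul K _

theorem sq_abs_integral_comp_sub_le_sq (hX : Martingale X ℱ P) (hij : i ≤ j)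
    (hi : MemLp (X i) 2 P) (hj : MemLp (X j) 2 P) {F : ℝ → ℝ} (hF : ContDiff ℝ 2 F) {C : ℝ}
    (hF' : ∀ y, |deriv F y| ≤ C) {K : ℝ} (hF'' : ∀ y, |deriv (deriv F) y| ≤ 2 * K)
    (hFi : Integrable (fun ω => F (X i ω)) P) (hFj : Integrable (fun ω => F (X j ω)) P) :
    |∫ ω, F (X j ω) ∂P - ∫ ω, F (X i ω) ∂P| ^ 2 ≤
      K ^ 2 * (∫ ω, X j ω ^ 2 ∂P - ∫ ω, X i ω ^ 2 ∂P) ^ 2 := by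
  rw [← mul_pow, ← hX.integral_sub_sq_eq hij hi hj]
  exact pow_le_pow_left₀ (abs_nonneg _)
    (hX.abs_integral_comp_sub_le hij hi hj hF hF' hF'' hFi hFj) 2

theorem continuousOn_integral_sq [TopologicalSpace ι] [FirstCountableTopology ι]
    (hX : Martingale X ℱ P) (hX2 : ∀ i, MemLp (X i) 2 P) (hcont : ∀ ω, Continuous fun i => X i ω)
    (T : ι) : ContinuousOn (fun i => ∫ ω, X i ω ^ 2 ∂P) (Iic T) :=
  continuousOn_of_lowerSemicontinuous_of_add_eq (c := ∫ ω, X T ω ^ 2 ∂P)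
    (lowerSemicontinuous_integral_sq hX2 hcont)
    (lowerSemicontinuous_integral_sq (Y := fun i => X T - X i) (fun i => (hX2 T).sub (hX2 i))
      fun ω => continuous_const.sub (hcont ω))
    fun i hi => by
      simp only [Pi.sub_apply]
      rw [hX.integral_sub_sq_eq hi (hX2 i) (hX2 T)]
      ring

end FiniteMeasure

theorem sq_abs_integral_comp_sub_le_integral_pow_four [IsProbabilityMeasure P]
    (hX : Martingale X ℱ P) (hij : i ≤ j)
    (hi : MemLp (X i) 4 P) (hj : MemLp (X j) 4 P) {F : ℝ → ℝ} (hF : ContDiff ℝ 2 F) {C : ℝ}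
    (hF' : ∀ y, |deriv F y| ≤ C) {K : ℝ} (hF'' : ∀ y, |deriv (deriv F) y| ≤ 2 * K)
    (hFi : Integrable (fun ω => F (X i ω)) P) (hFj : Integrable (fun ω => F (X j ω)) P) :
    |∫ ω, F (X j ω) ∂P - ∫ ω, F (X i ω) ∂P| ^ 2 ≤ K ^ 2 * ∫ ω, |X j ω - X i ω| ^ 4 ∂P := by
  have hi2 : MemLp (X i) 2 P := hi.mono_exponent (by norm_num)
  have hj2 : MemLp (X j) 2 P := hj.mono_exponent (by norm_num)
  have hpow4 : ∀ ω, |X j ω - X i ω| ^ 4 = ((X j ω - X i ω) ^ 2) ^ 2 := fun ω => by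
    rw [(by norm_num : Even 4).pow_abs, ← pow_mul]
  have hsq : MemLp (fun ω => (X j ω - X i ω) ^ 2) 2 P := by
    refine (memLp_two_iff_integrable_sq ((hj2.sub hi2).aestronglyMeasurable.pow 2)).mpr ?_
    refine ((hj.sub hi).integrable_norm_pow (p := 4) (by norm_num)).congr
      (.of_forall fun ω => ?_)
    simp only [Pi.sub_apply, Pi.pow_apply, Real.norm_eq_abs, hpow4]
  calc |∫ ω, F (X j ω) ∂P - ∫ ω, F (X i ω) ∂P| ^ 2
      ≤ K ^ 2 * (∫ ω, (X j ω - X i ω) ^ 2 ∂P) ^ 2 := by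
        rw [← mul_pow]
        exact pow_le_pow_left₀ (abs_nonneg _)
          (hX.abs_integral_comp_sub_le hij hi2 hj2 hF hF' hF'' hFi hFj) 2
    _ ≤ K ^ 2 * ∫ ω, |X j ω - X i ω| ^ 4 ∂P := by
        simp only [hpow4]
        exact mul_le_mul_of_nonneg_left (sq_integral_le_integral_sq hsq) (sq_nonneg K)

end MeasureTheory.Martingale

theorem terminal_function_increment_sums_vanish_general
    {Ω : Type*} {m0 : MeasurableSpace Ω} (P : Measure Ω) [IsProbabilityMeasure P]
    (ℱ : Filtration ℝ m0) (T : ℝ)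
    (X : ℝ → Ω → ℝ)
    (hMart : Martingale X ℱ P)
    (hL4 : ∀ r : ℝ, MemLp (X r) 4 P)
    (hcont : ∀ ω, Continuous fun r => X r ω)
    (F : ℝ → ℝ) (hF : ContDiff ℝ 2 F)
    (cF' : ℝ) (hF' : ∀ y, |deriv F y| ≤ cF')
    (K : ℝ) (hF'' : ∀ y, |deriv (deriv F) y| ≤ 2 * K)
    (hFint : ∀ r : ℝ, Integrable (fun ω => F (X r ω)) P)
    -- partitions of `[t,s] ⊆ [0,T]` with mesh tending to zero
    (t s : ℝ) (hts : 0 ≤ t)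
    (k : ℕ → ℕ) (u : ℕ → ℕ → ℝ)
    (hmono : ∀ n j, u n j ≤ u n (j + 1))
    (hstart : ∀ n, u n 0 = t)
    (hend : ∀ n j, k n ≤ j → u n j = s)
    (hmesh : ∀ ε > (0:ℝ), ∃ N, ∀ n ≥ N, ∀ j, u n (j + 1) - u n j ≤ ε) :
    (∀ n, ∑ j ∈ Finset.range (k n),
        |∫ ω, (F (X (T - u n (j + 1)) ω) - F (X (T - u n j) ω)) ∂P| ^ 2 ≤
      K ^ 2 * ∑ j ∈ Finset.range (k n),
        ∫ ω, |X (T - u n (j + 1)) ω - X (T - u n j) ω| ^ 4 ∂P) ∧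
    Tendsto (fun n => ∑ j ∈ Finset.range (k n),
        |∫ ω, (F (X (T - u n (j + 1)) ω) - F (X (T - u n j) ω)) ∂P| ^ 2)
      atTop (nhds 0) := by
  have hX2 : ∀ r, MemLp (X r) 2 P := fun r => (hL4 r).mono_exponent (by norm_num)
  have hle : ∀ n j, T - u n (j + 1) ≤ T - u n j := fun n j => by linarith [hmono n j]
  have hswap : ∀ a b, |∫ ω, (F (X a ω) - F (X b ω)) ∂P| =
      |∫ ω, F (X b ω) ∂P - ∫ ω, F (X a ω) ∂P| := fun a b => by
    rw [integral_sub (hFint a) (hFint b), abs_sub_comm]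
  refine ⟨fun n => Finset.mul_sum (Finset.range (k n)) _ (K ^ 2) ▸
    Finset.sum_le_sum fun j _ => ?_, ?_⟩
  · simp_rw [hswap, abs_sub_comm (X (T - u n (j + 1)) _)]
    exact hMart.sq_abs_integral_comp_sub_le_integral_pow_four (hle n j) (hL4 _) (hL4 _) hF hF'
      hF'' (hFint _) (hFint _)
  · set φ : ℝ → ℝ := fun v => -∫ ω, X (T - v) ω ^ 2 ∂P
    have hφm : MonotoneOn φ (Icc t s) := fun v _ w _ hvw =>
      neg_le_neg (hMart.monotone_integral_sq hX2 (by linarith))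
    have hφc : ContinuousOn φ (Icc t s) :=
      ((hMart.continuousOn_integral_sq hX2 hcont T).comp (continuousOn_const.sub continuousOn_id)
        fun v hv => show T - v ≤ T by linarith [hv.1]).neg
    have hlim := (tendsto_sum_sq_sub_of_mesh_tendsto_zero hφc hφm hmono hstart hend
      hmesh).const_mul (K ^ 2)
    simp_rw [mul_zero, Finset.mul_sum] at hlim
    refine squeeze_zero (fun n => Finset.sum_nonneg fun j _ => sq_nonneg _)
      (fun n => Finset.sum_le_sum fun j _ => ?_) hlim
    rw [hswap]
    simp only [φ, neg_sub_neg]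
    exact hMart.sq_abs_integral_comp_sub_le_sq (hle n j) (hX2 _) (hX2 _) hF hF' hF''
      (hFint _) (hFint _)

/-- Let `X̃` be a continuous martingale with fourth moments and `F` a `C²`
function with bounded derivatives, `K = (1/2) sup|F''|`. Then along a sequence of
partitions of `[t,s]` with mesh `→ 0`, the time-reversed increment sums satisfy
`∑_j |E[F(X̃_{T-t_{j+1}}) - F(X̃_{T-t_j})]|² ≤ K² ∑_j E[|X̃_{T-t_{j+1}} - X̃_{T-t_j}|⁴]`,
and hence tend to `0` since the expected quartic variation of the continuous `L⁴`
martingale `X̃` vanishes. -/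
theorem terminal_function_increment_sums_vanish
    {Ω : Type*} {m0 : MeasurableSpace Ω} (P : Measure Ω) [IsProbabilityMeasure P]
    (ℱ : Filtration ℝ m0) (T : ℝ) (hT : 0 < T)
    (X : ℝ → Ω → ℝ)
    (hMart : Martingale X ℱ P)
    (hL4 : ∀ r : ℝ, MemLp (X r) 4 P)
    (hcont : ∀ ω, Continuous fun r => X r ω)
    (F : ℝ → ℝ) (hF : ContDiff ℝ 2 F)
    (cF' : ℝ) (hF' : ∀ y, |deriv F y| ≤ cF')
    (K : ℝ) (hK : 0 ≤ K) (hF'' : ∀ y, |deriv (deriv F) y| ≤ 2 * K)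
    (hFint : ∀ r : ℝ, Integrable (fun ω => F (X r ω)) P)
    -- partitions of `[t,s] ⊆ [0,T]` with mesh tending to zero
    (t s : ℝ) (hts : 0 ≤ t) (htsle : t ≤ s) (hsT : s ≤ T)
    (k : ℕ → ℕ) (u : ℕ → ℕ → ℝ)
    (hmono : ∀ n j, u n j ≤ u n (j + 1))
    (hstart : ∀ n, u n 0 = t)
    (hend : ∀ n j, k n ≤ j → u n j = s)
    (hmesh : ∀ ε > (0:ℝ), ∃ N, ∀ n ≥ N, ∀ j, u n (j + 1) - u n j ≤ ε) :
    (∀ n, ∑ j ∈ Finset.range (k n),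
        |∫ ω, (F (X (T - u n (j + 1)) ω) - F (X (T - u n j) ω)) ∂P| ^ 2 ≤
      K ^ 2 * ∑ j ∈ Finset.range (k n),
        ∫ ω, |X (T - u n (j + 1)) ω - X (T - u n j) ω| ^ 4 ∂P) ∧
    Tendsto (fun n => ∑ j ∈ Finset.range (k n),
        |∫ ω, (F (X (T - u n (j + 1)) ω) - F (X (T - u n j) ω)) ∂P| ^ 2)
      atTop (nhds 0) :=
  terminal_function_increment_sums_vanish_general P ℱ T X hMart hL4 hcont F hF cF' hF' K hF'' hFint
    t s hts k u hmono hstart hend hmesh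
end
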